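/- arXiv:2209.01873 — 7 statements merged into one kernel-verified Lean document; each statement's English description precedes it below -/
import Mathlib

section
/- For every odd integer k > 3, the complement of the k-cycle is color-critical: removing any vertex from the complement of C_k strictly decreases its chromatic number. -/
/-!
Write `k = 2m + 1`. A colour class of `(C_k)ᶜ` is a clique of `C_k`, and `C_k` is triangle-free for
`k ≥ 4`, so every colour class has at most two vertices and `(C_k)ᶜ` needs more than `m` colours.
Deleting a vertex `v` leaves the path `v + 1, …, v + 2m` of `C_k`, whose `m` consecutive pairs
`{v + 2i + 1, v + 2i + 2}` are edges of `C_k`, hence independent sets of its complement.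
-/

open Finset

namespace SimpleGraph

variable {V : Type*} {G : SimpleGraph V}

theorem IsClique.card_le_of_cliqueFree {r : ℕ} {s : Finset V} (hG : G.CliqueFree (r + 1))
    (hs : G.IsClique (s : Set V)) : #s ≤ r := by
  by_contra! h
  obtain ⟨t, hts, ht⟩ := exists_subset_card_eq (Nat.succ_le_of_lt h)
  exact hG t ⟨hs.subset (coe_subset.2 hts), ht⟩

theorem card_le_mul_of_cliqueFree_of_colorable_compl [Fintype V] {r m : ℕ}
    (hG : G.CliqueFree (r + 1)) (hc : Gᶜ.Colorable m) : Fintype.card V ≤ r * m := by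
  classical
  obtain ⟨C⟩ := hc
  have hclass (c : Fin m) : #{v | C v = c} ≤ r := by
    refine IsClique.card_le_of_cliqueFree hG ?_
    simpa [Coloring.colorClass] using (isIndepSet_compl G).1 (C.isIndepSet_colorClass c)
  simpa using card_le_mul_card_image_of_maps_to (f := C) (fun v _ => mem_univ (C v)) r
    fun c _ => hclass c

theorem cycleGraph_cliqueFree_three {n : ℕ} (hn : 4 ≤ n) : (cycleGraph n).CliqueFree 3 := by
  obtain ⟨n, rfl⟩ := Nat.exists_eq_add_of_le' hn
  have h3 : (3 : Fin (n + 4)) ≠ 0 := by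
    simp [Fin.ext_iff, Nat.mod_eq_of_lt (show 3 < n + 4 by omega)]
  intro s hs
  obtain ⟨a, b, c, hab, hac, hbc, -⟩ := is3Clique_iff.1 hs
  rw [cycleGraph_adj] at hab hac hbc
  -- `a - b`, `b - c` and their sum `a - c` are all `±1`, which forces `1 = 0` or `3 = 0`.
  grind

theorem cycleGraph_adj_sub_right {n : ℕ} [NeZero n] {u v w : Fin n} :
    (cycleGraph n).Adj (u - w) (v - w) ↔ (cycleGraph n).Adj u v := by
  simp only [cycleGraph_adj', sub_sub_sub_cancel_right]

theorem cycleGraph_adj_of_pred_div_two_eq {n : ℕ} [NeZero n] {u v : Fin n} (hu : u ≠ 0)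
    (hv : v ≠ 0) (huv : u ≠ v) (h : ((u : ℕ) - 1) / 2 = ((v : ℕ) - 1) / 2) :
    (cycleGraph n).Adj u v := by
  apply pathGraph_le_cycleGraph
  rw [pathGraph_adj]
  have hu' : (u : ℕ) ≠ 0 := Fin.val_ne_zero_iff.2 hu
  have hv' : (v : ℕ) ≠ 0 := Fin.val_ne_zero_iff.2 hv
  have huv' : (u : ℕ) ≠ v := Fin.val_ne_iff.2 huv
  omega

theorem colorable_compl_cycleGraph_induce_compl_singleton {n : ℕ} [NeZero n] (v : Fin n) :
    ((cycleGraph n)ᶜ.induce ({v}ᶜ : Set (Fin n))).Colorable (n / 2) := by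
  have hlt (u : ({v}ᶜ : Set (Fin n))) : ((((u : Fin n) - v : Fin n) : ℕ) - 1) / 2 < n / 2 := by
    have hpos : ((u - v : Fin n) : ℕ) ≠ 0 := Fin.val_ne_zero_iff.2 (sub_ne_zero.2 u.2)
    have := (u - v : Fin n).isLt
    omega
  refine ⟨Coloring.mk (fun u => ⟨((((u : Fin n) - v : Fin n) : ℕ) - 1) / 2, hlt u⟩) ?_⟩
  intro u w huw hcolor
  obtain ⟨hne, hnadj⟩ := (compl_adj _ _ _).1 huw
  refine hnadj (cycleGraph_adj_sub_right.1 (cycleGraph_adj_of_pred_div_two_eq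
    (sub_ne_zero.2 u.2) (sub_ne_zero.2 w.2) (sub_left_injective.ne hne) (Fin.mk.inj_iff.1 hcolor)))

theorem not_colorable_compl_cycleGraph {n m : ℕ} (hn : 4 ≤ n) (hm : 2 * m < n) :
    ¬(cycleGraph n)ᶜ.Colorable m := by
  intro h
  have := card_le_mul_of_cliqueFree_of_colorable_compl (cycleGraph_cliqueFree_three hn) h
  simp only [Fintype.card_fin] at this
  omega

end SimpleGraph

/-- For every odd integer `k > 3`, the complement of the `k`-cycle is color-critical:
removing any vertex strictly decreases its chromatic number. -/
theorem compl_odd_cycle_color_critical (k : ℕ) (hk : 3 < k) (hodd : Odd k) :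
    ∀ v : Fin k,
      (((SimpleGraph.cycleGraph k)ᶜ).induce ({v}ᶜ : Set (Fin k))).chromaticNumber
        < ((SimpleGraph.cycleGraph k)ᶜ).chromaticNumber := by
  intro v
  obtain ⟨m, rfl⟩ := hodd
  have hcol := SimpleGraph.colorable_compl_cycleGraph_induce_compl_singleton v
  rw [show (2 * m + 1) / 2 = m by omega] at hcol
  have hncol := SimpleGraph.not_colorable_compl_cycleGraph hk (show 2 * m < 2 * m + 1 by omega)
  exact hcol.chromaticNumber_le.trans_lt
    (not_le.1 (mt SimpleGraph.chromaticNumber_le_iff_colorable.1 hncol))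
end

section
/- Let H be a graph with a K_t-minor function f: V(H) → {1,...,t}, let G be a graph, and construct the graph G* with vertex set V(H) × V(G) where ((u,w1),(v,w2)) is an edge iff uv ∈ E(H) and either (f(u) ≠ f(v) and w1w2 ∈ E(G)) or (f(u) = f(v) and w1 = w2). Then G* contains a colorful copy of H (a copy with exactly one vertex in each part {v} × V(G) for v ∈ V(H)) if and only if G contains a t-clique. -/
/-- The graph `G*` built from a pattern `H` (with a `K_t`-minor function `f`) and a host
graph `G`: vertices are pairs `(v, w) ∈ V(H) × V(G)`, and `(u, w₁)` is adjacent to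
`(v, w₂)` iff `uv ∈ E(H)` and either (`f u ≠ f v` and `w₁w₂ ∈ E(G)`) or
(`f u = f v` and `w₁ = w₂`). -/
def minorReductionGraph {α β : Type*} (H : SimpleGraph β) (G : SimpleGraph α)
    {t : ℕ} (f : β → Fin t) : SimpleGraph (β × α) :=
  SimpleGraph.fromRel (fun p q =>
    H.Adj p.1 q.1 ∧ ((f p.1 ≠ f q.1 ∧ G.Adj p.2 q.2) ∨ (f p.1 = f q.1 ∧ p.2 = q.2)))

lemma const_of_preconnected {γ α : Type*} {G' : SimpleGraph γ} (hp : G'.Preconnected)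
    {h : γ → α} (hadj : ∀ a b, G'.Adj a b → h a = h b) (a b : γ) : h a = h b := by
  obtain ⟨w⟩ := hp a b
  induction w with
  | nil => rfl
  | cons hab _ ih => exact (hadj _ _ hab).trans ih

/-- **Hardness of PSI.** Let `H` be a pattern with a `K_t`-minor function `f` (each
color class induces a connected subgraph and there is an edge between any two distinct
color classes), and let `G` be a host graph. Then the reduction graph `G*` contains a
colorful copy of `H` (one vertex in the part `{v} × V(G)` for each `v ∈ V(H)`, the
vertex in part `v` being a copy of `v`) if and only if `G` contains a `t`-clique. -/
theorem psi_hardness {α β : Type*} [Fintype α] [Fintype β] [DecidableEq α]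
    (H : SimpleGraph β) (G : SimpleGraph α) (t : ℕ) (f : β → Fin t)
    (hconn : ∀ i : Fin t, (H.induce {v : β | f v = i}).Connected)
    (hedge : ∀ i j : Fin t, i ≠ j → ∃ u v : β, f u = i ∧ f v = j ∧ H.Adj u v) :
    (∃ g : β → α, ∀ u v : β, H.Adj u v →
        (minorReductionGraph H G f).Adj (u, g u) (v, g v)) ↔
      ∃ s : Finset α, G.IsNClique t s := by
  constructor
  · rintro ⟨g, hg⟩
    -- g is constant on each color class
    have hsame : ∀ u v : β, H.Adj u v → f u = f v → g u = g v := by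
      intro u v huv hfe
      have := hg u v huv
      rw [minorReductionGraph, SimpleGraph.fromRel_adj] at this
      rcases this.2 with ⟨_, h⟩ | ⟨_, h⟩
      · rcases h with ⟨hne, _⟩ | ⟨_, he⟩
        · exact absurd hfe hne
        · exact he
      · rcases h with ⟨hne, _⟩ | ⟨_, he⟩
        · exact absurd hfe.symm hne
        · exact he.symm
    have hconst : ∀ i : Fin t, ∀ u v : β, f u = i → f v = i → g u = g v := by
      intro i u v hu hv
      have := const_of_preconnected (hconn i).preconnected
        (h := fun x : {v : β | f v = i} => g x.1)
        (fun a b hab => hsame a.1 b.1 hab (a.2.trans b.2.symm)) ⟨u, hu⟩ ⟨v, hv⟩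
      exact this
    -- each class is nonempty
    have hne : ∀ i : Fin t, ∃ v : β, f v = i := by
      intro i
      obtain ⟨⟨v, hv⟩⟩ := (hconn i).nonempty
      exact ⟨v, hv⟩
    choose rep hrep using hne
    set c : Fin t → α := fun i => g (rep i) with hc
    have hadjc : ∀ i j : Fin t, i ≠ j → G.Adj (c i) (c j) := by
      intro i j hij
      obtain ⟨u, v, hu, hv, huv⟩ := hedge i j hij
      have := hg u v huv
      rw [minorReductionGraph, SimpleGraph.fromRel_adj] at this
      have hneq : f u ≠ f v := by rw [hu, hv]; exact hij
      have hGadj : G.Adj (g u) (g v) := by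
        rcases this.2 with ⟨_, h⟩ | ⟨_, h⟩
        · rcases h with ⟨_, ha⟩ | ⟨heq, _⟩
          · exact ha
          · exact absurd heq hneq
        · rcases h with ⟨_, ha⟩ | ⟨heq, _⟩
          · exact ha.symm
          · exact absurd heq.symm hneq
      rwa [hconst i u (rep i) hu (hrep i), hconst j v (rep j) hv (hrep j)] at hGadj
    have hcinj : Function.Injective c := by
      intro i j hij
      by_contra hne
      exact G.irrefl (hij ▸ hadjc i j hne)
    refine ⟨Finset.univ.image c, ?_, ?_⟩
    · intro a ha b hb hab
      simp only [Finset.coe_image, Set.mem_image] at ha hb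
      obtain ⟨i, _, rfl⟩ := ha
      obtain ⟨j, _, rfl⟩ := hb
      exact hadjc i j (fun h => hab (h ▸ rfl))
    · rw [Finset.card_image_of_injective _ hcinj, Finset.card_univ, Fintype.card_fin]
  · rintro ⟨s, hclique, hcard⟩
    have : ∃ c : Fin t → α, Function.Injective c ∧ ∀ i, c i ∈ s := by
      have : Fintype.card (Fin t) = s.card := by rw [Fintype.card_fin, hcard]
      let e := Fintype.equivOfCardEq (this.trans (Fintype.card_coe s).symm)
      exact ⟨fun i => (e i).1, fun i j h => e.injective (Subtype.ext h), fun i => (e i).2⟩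
    obtain ⟨c, hcinj, hcs⟩ := this
    refine ⟨fun v => c (f v), ?_⟩
    intro u v huv
    rw [minorReductionGraph, SimpleGraph.fromRel_adj]
    refine ⟨fun h => huv.ne (congrArg Prod.fst h), Or.inl ⟨huv, ?_⟩⟩
    by_cases hfe : f u = f v
    · exact Or.inr ⟨hfe, congrArg c hfe⟩
    · exact Or.inl ⟨hfe, hclique (hcs (f u)) (hcs (f v)) (fun h => hfe (hcinj h))⟩
end

section
/- Let k be even, k ≥ 6, and let H be the complement of the cycle C_k = v_1...v_k v_1. Every graph homomorphism from H to a proper subgraph of H maps two distinct vertices to a common vertex that is either v_1 or v_k. -/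
open SimpleGraph

/-- Consecutive vertices (including the wrap-around pair) are adjacent in the cycle. -/
lemma cycAdj_of_val (k : ℕ) (hk : 6 ≤ k) (x y : Fin k)
    (h : y.val = x.val + 1 ∨ (x.val = k - 1 ∧ y.val = 0)) :
    (cycleGraph k).Adj x y := by
  have hx := x.isLt
  have hy := y.isLt
  rw [cycleGraph_adj']
  right
  rw [Fin.sub_def]
  show (k - x.val + y.val) % k = 1
  rcases h with h | ⟨h1, h2⟩
  · rw [show k - x.val + y.val = k + 1 by omega, Nat.add_mod_left]
    exact Nat.mod_eq_of_lt (by omega)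
  · rw [show k - x.val + y.val = 1 by omega]
    exact Nat.mod_eq_of_lt (by omega)

/-- Distinct vertices of the same parity are adjacent in the complement of the even cycle. -/
lemma par_compl_adj (k : ℕ) (hk : 6 ≤ k) (heven : Even k) (x y : Fin k)
    (hne : x ≠ y) (hpar : x.val % 2 = y.val % 2) :
    ((cycleGraph k)ᶜ).Adj x y := by
  obtain ⟨m, hm⟩ := heven
  have hx := x.isLt
  have hy := y.isLt
  rw [compl_adj]
  refine ⟨hne, ?_⟩
  rw [cycleGraph_adj']
  push_neg
  have h2 : (2 : ℕ) ∣ k := ⟨m, by omega⟩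
  constructor
  · rw [Fin.sub_def]
    show (k - y.val + x.val) % k ≠ 1
    intro hcon
    have := Nat.mod_mod_of_dvd (k - y.val + x.val) h2
    omega
  · rw [Fin.sub_def]
    show (k - x.val + y.val) % k ≠ 1
    intro hcon
    have := Nat.mod_mod_of_dvd (k - x.val + y.val) h2
    omega

/-- A maximum independent set in an even cycle consists of all even vertices or all
odd vertices. -/
lemma maxIndep_even_cycle (k m : ℕ) (hk : 6 ≤ k) (hm : k = 2 * m)
    (S : Finset (Fin k)) (hcard : S.card = m)
    (hind : ∀ a ∈ S, ∀ b ∈ S, ¬ (cycleGraph k).Adj a b) :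
    (∀ n (hn : n < k), n % 2 = 0 → (⟨n, hn⟩ : Fin k) ∈ S) ∨
    (∀ n (hn : n < k), n % 2 = 1 → (⟨n, hn⟩ : Fin k) ∈ S) := by
  have hmpos : 3 ≤ m := by omega
  -- first projection: x ↦ x.val / 2
  have hsurj1 : ∀ i : ℕ, i < m → ∃ x ∈ S, x.val / 2 = i := by
    intro i hi
    set f1 : Fin k → Fin m := fun x => ⟨x.val / 2, by have := x.isLt; omega⟩ with hf1
    have hinj : Set.InjOn f1 (S : Set (Fin k)) := by
      intro x hx y hy hxy
      by_contra hne
      have hval : x.val / 2 = y.val / 2 := congrArg Fin.val hxy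
      have hvne : x.val ≠ y.val := fun h => hne (Fin.ext h)
      rcases Nat.lt_or_ge x.val y.val with hlt | hge
      · exact hind x hx y hy (cycAdj_of_val k hk x y (Or.inl (by omega)))
      · exact hind y hy x hx (cycAdj_of_val k hk y x (Or.inl (by omega)))
    have himg : Finset.image f1 S = Finset.univ := by
      apply Finset.eq_univ_of_card
      rw [Finset.card_image_of_injOn hinj, hcard, Fintype.card_fin]
    have : (⟨i, hi⟩ : Fin m) ∈ Finset.image f1 S := by rw [himg]; exact Finset.mem_univ _
    obtain ⟨x, hxS, hx⟩ := Finset.mem_image.mp this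
    exact ⟨x, hxS, congrArg Fin.val hx⟩
  -- second projection: x ↦ succ x / 2 with succ the cyclic successor
  have hsurj2 : ∀ i : ℕ, i < m →
      ∃ x ∈ S, (if x.val = k - 1 then 0 else x.val + 1) / 2 = i := by
    intro i hi
    set sc : Fin k → ℕ := fun x => if x.val = k - 1 then 0 else x.val + 1 with hsc
    set f2 : Fin k → Fin m := fun x => ⟨sc x / 2, by
      have := x.isLt; simp only [hsc]; split <;> omega⟩ with hf2
    have hadj : ∀ x y : Fin k, sc x + 1 = sc y → (cycleGraph k).Adj x y := by
      intro x y hxy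
      have hx := x.isLt
      have hy := y.isLt
      simp only [hsc] at hxy
      apply cycAdj_of_val k hk x y
      split at hxy <;> split at hxy <;> omega
    have hinj : Set.InjOn f2 (S : Set (Fin k)) := by
      intro x hx y hy hxy
      by_contra hne
      have hval : sc x / 2 = sc y / 2 := congrArg Fin.val hxy
      have hvne : sc x ≠ sc y := by
        intro h
        apply hne
        have hxk := x.isLt
        have hyk := y.isLt
        simp only [hsc] at h
        apply Fin.ext
        split at h <;> split at h <;> omega
      rcases Nat.lt_or_ge (sc x) (sc y) with hlt | hge
      · exact hind x hx y hy (hadj x y (by omega))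
      · exact hind y hy x hx (hadj y x (by omega))
    have himg : Finset.image f2 S = Finset.univ := by
      apply Finset.eq_univ_of_card
      rw [Finset.card_image_of_injOn hinj, hcard, Fintype.card_fin]
    have : (⟨i, hi⟩ : Fin m) ∈ Finset.image f2 S := by rw [himg]; exact Finset.mem_univ _
    obtain ⟨x, hxS, hx⟩ := Finset.mem_image.mp this
    exact ⟨x, hxS, congrArg Fin.val hx⟩
  -- one of 0, 1 belongs to S
  obtain ⟨x0, hx0S, hx0⟩ := hsurj1 0 (by omega)
  have hx0lt := x0.isLt
  rcases Nat.lt_or_ge x0.val 1 with h0 | h1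
  · -- 0 ∈ S : all evens belong to S
    left
    have hx0eq : x0 = ⟨0, by omega⟩ := Fin.ext (by show x0.val = 0; omega)
    have key : ∀ i, ∀ hi : i < m, (⟨2 * i, by omega⟩ : Fin k) ∈ S := by
      intro i
      induction i with
      | zero =>
        intro _
        have : (⟨2 * 0, by omega⟩ : Fin k) = ⟨0, by omega⟩ := Fin.ext (by norm_num)
        rw [this, ← hx0eq]; exact hx0S
      | succ i ih =>
        intro hi
        have hprev := ih (by omega)
        obtain ⟨y, hyS, hy⟩ := hsurj2 (i + 1) hi
        have hyk := y.isLt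
        by_cases hlast : y.val = k - 1
        · rw [if_pos hlast] at hy; omega
        · simp only [hlast, if_neg, ite_false] at hy
          have hcases : y.val = 2 * i + 1 ∨ y.val = 2 * i + 2 := by omega
          rcases hcases with hc | hc
          · exfalso
            exact hind (⟨2 * i, by omega⟩ : Fin k) hprev y hyS
              (cycAdj_of_val k hk _ y (Or.inl (by simp [hc])))
          · have : y = (⟨2 * (i + 1), by omega⟩ : Fin k) := Fin.ext (by simp; omega)
            rw [← this]; exact hyS
    intro n hn hpar
    have : (⟨n, hn⟩ : Fin k) = ⟨2 * (n / 2), by omega⟩ := Fin.ext (by simp; omega)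
    rw [this]
    exact key (n / 2) (by omega)
  · -- 1 ∈ S : all odds belong to S
    right
    have hx0eq : x0 = ⟨1, by omega⟩ := Fin.ext (by show x0.val = 1; omega)
    have key : ∀ i, ∀ hi : i < m, (⟨2 * i + 1, by omega⟩ : Fin k) ∈ S := by
      intro i
      induction i with
      | zero =>
        intro _
        have : (⟨2 * 0 + 1, by omega⟩ : Fin k) = ⟨1, by omega⟩ := Fin.ext (by norm_num)
        rw [this, ← hx0eq]; exact hx0S
      | succ i ih =>
        intro hi
        have hprev := ih (by omega)
        obtain ⟨y, hyS, hy⟩ := hsurj1 (i + 1) hi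
        have hyk := y.isLt
        have hcases : y.val = 2 * i + 2 ∨ y.val = 2 * i + 3 := by omega
        rcases hcases with hc | hc
        · exfalso
          exact hind (⟨2 * i + 1, by omega⟩ : Fin k) hprev y hyS
            (cycAdj_of_val k hk _ y (Or.inl (by simp [hc])))
        · have : y = (⟨2 * (i + 1) + 1, by omega⟩ : Fin k) := Fin.ext (by simp; omega)
          rw [← this]; exact hyS
    intro n hn hpar
    have : (⟨n, hn⟩ : Fin k) = ⟨2 * ((n - 1) / 2) + 1, by omega⟩ := Fin.ext (by simp; omega)
    rw [this]
    exact key ((n - 1) / 2) (by omega)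

/-- Let `k` be even, `k ≥ 6`, and let `H` be the complement of the `k`-cycle on
vertices `0, …, k-1` (corresponding to `v_1, …, v_k`). Every graph homomorphism from
`H` to a proper subgraph of `H` (i.e. every non-surjective self-homomorphism) maps two
distinct vertices to a common vertex that is either `v_1` (index `0`) or `v_k`
(index `k-1`). -/
theorem compl_even_cycle_hom_to_proper (k : ℕ) (hk : 6 ≤ k) (heven : Even k)
    (g : (SimpleGraph.cycleGraph k)ᶜ →g (SimpleGraph.cycleGraph k)ᶜ)
    (hns : ¬ Function.Surjective g) :
    ∃ a b : Fin k, a ≠ b ∧ g a = g b ∧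
      (g a = (⟨0, by omega⟩ : Fin k) ∨ g a = (⟨k - 1, by omega⟩ : Fin k)) := by
  obtain ⟨m, hm'⟩ := heven
  have hm : k = 2 * m := by omega
  have hmpos : 3 ≤ m := by omega
  -- even and odd vertex embeddings
  set e : Fin m → Fin k := fun i => ⟨2 * i.val, by have := i.isLt; omega⟩ with he
  set o : Fin m → Fin k := fun i => ⟨2 * i.val + 1, by have := i.isLt; omega⟩ with ho
  set SE : Finset (Fin k) := Finset.image (fun i => g (e i)) Finset.univ with hSE
  set SO : Finset (Fin k) := Finset.image (fun i => g (o i)) Finset.univ with hSO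
  -- injectivity of g on each parity class
  have hinjE : Set.InjOn (fun i => g (e i)) (Finset.univ : Finset (Fin m)) := by
    intro i _ j _ hij
    by_contra hne
    have hneq : e i ≠ e j := by
      intro h; exact hne (Fin.ext (by
        have := congrArg Fin.val h; simp only [he] at this; omega))
    have := (g.map_adj (par_compl_adj k hk ⟨m, by omega⟩ (e i) (e j) hneq
      (by simp only [he]; omega))).ne
    exact this hij
  have hinjO : Set.InjOn (fun i => g (o i)) (Finset.univ : Finset (Fin m)) := by
    intro i _ j _ hij
    by_contra hne
    have hneq : o i ≠ o j := by
      intro h; exact hne (Fin.ext (by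
        have := congrArg Fin.val h; simp only [ho] at this; omega))
    have := (g.map_adj (par_compl_adj k hk ⟨m, by omega⟩ (o i) (o j) hneq
      (by simp only [ho]; omega))).ne
    exact this hij
  -- independence of images
  have hindE : ∀ a ∈ SE, ∀ b ∈ SE, ¬ (SimpleGraph.cycleGraph k).Adj a b := by
    intro a ha b hb hadj
    obtain ⟨i, _, hi⟩ := Finset.mem_image.mp ha
    obtain ⟨j, _, hj⟩ := Finset.mem_image.mp hb
    by_cases hij : i = j
    · exact (SimpleGraph.irrefl _) (by rw [← hi, ← hj, hij] at hadj; exact hadj)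
    · have hneq : e i ≠ e j := by
        intro h; exact hij (Fin.ext (by
          have := congrArg Fin.val h; simp only [he] at this; omega))
      have hcadj := g.map_adj (par_compl_adj k hk ⟨m, by omega⟩ (e i) (e j) hneq
        (by simp only [he]; omega))
      rw [SimpleGraph.compl_adj] at hcadj
      exact hcadj.2 (by rw [← hi, ← hj] at hadj; exact hadj)
  have hindO : ∀ a ∈ SO, ∀ b ∈ SO, ¬ (SimpleGraph.cycleGraph k).Adj a b := by
    intro a ha b hb hadj
    obtain ⟨i, _, hi⟩ := Finset.mem_image.mp ha
    obtain ⟨j, _, hj⟩ := Finset.mem_image.mp hb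
    by_cases hij : i = j
    · exact (SimpleGraph.irrefl _) (by rw [← hi, ← hj, hij] at hadj; exact hadj)
    · have hneq : o i ≠ o j := by
        intro h; exact hij (Fin.ext (by
          have := congrArg Fin.val h; simp only [ho] at this; omega))
      have hcadj := g.map_adj (par_compl_adj k hk ⟨m, by omega⟩ (o i) (o j) hneq
        (by simp only [ho]; omega))
      rw [SimpleGraph.compl_adj] at hcadj
      exact hcadj.2 (by rw [← hi, ← hj] at hadj; exact hadj)
  have hcardE : SE.card = m := by
    rw [hSE, Finset.card_image_of_injOn hinjE, Finset.card_univ, Fintype.card_fin]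
  have hcardO : SO.card = m := by
    rw [hSO, Finset.card_image_of_injOn hinjO, Finset.card_univ, Fintype.card_fin]
  have hE := maxIndep_even_cycle k m hk hm SE hcardE hindE
  have hO := maxIndep_even_cycle k m hk hm SO hcardO hindO
  have hk1 : (k - 1) % 2 = 1 := by omega
  rcases hE with hEe | hEo <;> rcases hO with hOe | hOo
  · -- both images contain all evens; 0 is a doubly-covered vertex
    have h1 : (⟨0, by omega⟩ : Fin k) ∈ SE := hEe 0 (by omega) (by omega)
    have h2 : (⟨0, by omega⟩ : Fin k) ∈ SO := hOe 0 (by omega) (by omega)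
    obtain ⟨i, _, hi⟩ := Finset.mem_image.mp h1
    obtain ⟨j, _, hj⟩ := Finset.mem_image.mp h2
    refine ⟨e i, o j, ?_, by rw [hi, hj], Or.inl (by rw [hi])⟩
    intro h
    have := congrArg Fin.val h
    simp only [he, ho] at this
    omega
  · -- SE = evens, SO = odds : g would be surjective
    exfalso
    apply hns
    intro z
    have hz := z.isLt
    rcases Nat.even_or_odd z.val with hpar | hpar
    · have : z ∈ SE := by
        have := hEe z.val hz (Nat.even_iff.mp hpar)
        simpa using this
      obtain ⟨i, _, hi⟩ := Finset.mem_image.mp this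
      exact ⟨e i, hi⟩
    · have : z ∈ SO := by
        have := hOo z.val hz (Nat.odd_iff.mp hpar)
        simpa using this
      obtain ⟨i, _, hi⟩ := Finset.mem_image.mp this
      exact ⟨o i, hi⟩
  · -- SE = odds, SO = evens : g would be surjective
    exfalso
    apply hns
    intro z
    have hz := z.isLt
    rcases Nat.even_or_odd z.val with hpar | hpar
    · have : z ∈ SO := by
        have := hOe z.val hz (Nat.even_iff.mp hpar)
        simpa using this
      obtain ⟨i, _, hi⟩ := Finset.mem_image.mp this
      exact ⟨o i, hi⟩
    · have : z ∈ SE := by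
        have := hEo z.val hz (Nat.odd_iff.mp hpar)
        simpa using this
      obtain ⟨i, _, hi⟩ := Finset.mem_image.mp this
      exact ⟨e i, hi⟩
  · -- both images contain all odds; k-1 is a doubly-covered vertex
    have h1 : (⟨k - 1, by omega⟩ : Fin k) ∈ SE := hEo (k - 1) (by omega) hk1
    have h2 : (⟨k - 1, by omega⟩ : Fin k) ∈ SO := hOo (k - 1) (by omega) hk1
    obtain ⟨i, _, hi⟩ := Finset.mem_image.mp h1
    obtain ⟨j, _, hj⟩ := Finset.mem_image.mp h2
    refine ⟨e i, o j, ?_, by rw [hi, hj], Or.inr (by rw [hi])⟩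
    intro h
    have := congrArg Fin.val h
    simp only [he, ho] at this
    omega
end

section
/- Let k ≥ 5 and let H be the complement of the path P_k = v_1 v_2 ... v_k. Every graph homomorphism from H to a proper subgraph of H maps two distinct vertices of H to a common vertex that is either v_1 or v_k. -/
/-- Let `k ≥ 5` and let `H` be the complement of the path `P_k = v_1 v_2 … v_k` (on
vertices `0, …, k-1`, corresponding to `v_1, …, v_k`). Every graph homomorphism from
`H` to a proper subgraph of `H` (i.e. every non-surjective self-homomorphism) maps two
distinct vertices of `H` to a common vertex that is either `v_1` (index `0`) or `v_k`
(index `k-1`). -/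
theorem compl_path_hom_to_proper (k : ℕ) (hk : 5 ≤ k)
    (g : (SimpleGraph.pathGraph k)ᶜ →g (SimpleGraph.pathGraph k)ᶜ)
    (hns : ¬ Function.Surjective g) :
    ∃ a b : Fin k, a ≠ b ∧ g a = g b ∧
      (g a = (⟨0, by omega⟩ : Fin k) ∨ g a = (⟨k - 1, by omega⟩ : Fin k)) := by
  classical
  by_contra hcon
  push_neg at hcon
  have adjH : ∀ a b : Fin k, ((SimpleGraph.pathGraph k)ᶜ).Adj a b ↔
      (a.val + 2 ≤ b.val ∨ b.val + 2 ≤ a.val) := by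
    intro a b
    simp [SimpleGraph.compl_adj, SimpleGraph.pathGraph_adj, Fin.ext_iff]
    omega
  have hmap : ∀ a b : Fin k, (a.val + 2 ≤ b.val ∨ b.val + 2 ≤ a.val) →
      ((g a).val + 2 ≤ (g b).val ∨ (g b).val + 2 ≤ (g a).val) := fun a b h =>
    (adjH _ _).1 (g.map_adj ((adjH _ _).2 h))
  -- collisions happen only between path-consecutive vertices
  have collide : ∀ a b : Fin k, a ≠ b → g a = g b →
      a.val + 1 = b.val ∨ b.val + 1 = a.val := by
    intro a b hab he
    by_contra h
    push_neg at h
    have hv : a.val ≠ b.val := fun hv => hab (Fin.ext hv)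
    have := hmap a b (by omega)
    rw [he] at this
    omega
  -- the set of collision values
  set C : Finset (Fin k) := Finset.univ.filter
    (fun c => ∃ a b : Fin k, a ≠ b ∧ g a = g b ∧ g a = c) with hC
  have hCmem : ∀ c : Fin k, c ∈ C ↔ ∃ a b : Fin k, a ≠ b ∧ g a = g b ∧ g a = c := by
    intro c; simp [hC]
  have hCint : ∀ c ∈ C, 1 ≤ c.val ∧ c.val + 2 ≤ k := by
    intro c hc
    obtain ⟨a, b, hab, he, hval⟩ := (hCmem c).1 hc
    obtain ⟨h0, h1⟩ := hcon a b hab he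
    rw [hval] at h0 h1
    simp only [ne_eq, Fin.ext_iff] at h0 h1
    have := c.isLt
    omega
  -- a normalized collision pair for each collision value
  have hpair : ∀ c ∈ C, ∃ a b : Fin k, a.val + 1 = b.val ∧ g a = c ∧ g b = c := by
    intro c hc
    obtain ⟨a, b, hab, he, hval⟩ := (hCmem c).1 hc
    rcases collide a b hab he with h | h
    · exact ⟨a, b, h, hval, he ▸ hval⟩
    · exact ⟨b, a, h, he ▸ hval, hval⟩
  -- no image value is path-adjacent to a collision value
  have key : ∀ c ∈ C, ∀ u : Fin k,
      ¬((g u).val + 1 = c.val ∨ c.val + 1 = (g u).val) := by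
    intro c hc u hcontra
    obtain ⟨a, b, hab, hga, hgb⟩ := hpair c hc
    by_cases hua : u = a
    · rw [hua, hga] at hcontra; omega
    by_cases hub : u = b
    · rw [hub, hgb] at hcontra; omega
    have hva' : u.val ≠ a.val := fun h => hua (Fin.ext h)
    have hvb' : u.val ≠ b.val := fun h => hub (Fin.ext h)
    rcases lt_or_gt_of_ne hva' with h | h
    · have := hmap u b (by omega)
      rw [hgb] at this
      omega
    · have := hmap u a (by omega)
      rw [hga] at this
      omega
  -- fibers have size at most 2; size 2 only at collision values
  have fib_le : ∀ c : Fin k, (Finset.univ.filter (fun u => g u = c)).card ≤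
      1 + (if c ∈ C then 1 else 0) := by
    intro c
    by_cases hc : c ∈ C
    · simp only [hc, if_true]
      obtain ⟨a, b, hab, hga, hgb⟩ := hpair c hc
      have hsub : (Finset.univ.filter (fun u => g u = c)) ⊆ {a, b} := by
        intro u hu
        have hgu := (Finset.mem_filter.1 hu).2
        simp only [Finset.mem_insert, Finset.mem_singleton]
        by_contra hne
        push_neg at hne
        have hva' : u.val ≠ a.val := fun h => hne.1 (Fin.ext h)
        have hvb' : u.val ≠ b.val := fun h => hne.2 (Fin.ext h)
        rcases lt_or_gt_of_ne hva' with h | h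
        · have := hmap u b (by omega)
          rw [hgu, hgb] at this; omega
        · have := hmap u a (by omega)
          rw [hgu, hga] at this; omega
      calc (Finset.univ.filter (fun u => g u = c)).card
          ≤ ({a, b} : Finset (Fin k)).card := Finset.card_le_card hsub
        _ ≤ 1 + 1 := by
            refine (Finset.card_insert_le _ _).trans ?_
            simp
    · simp only [hc, if_false]
      refine Finset.card_le_one.2 ?_
      intro u hu v hv
      by_contra hne
      exact hc ((hCmem c).2 ⟨u, v, hne,
        (Finset.mem_filter.1 hu).2.trans (Finset.mem_filter.1 hv).2.symm,
        (Finset.mem_filter.1 hu).2⟩)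
  -- the image
  set I : Finset (Fin k) := Finset.univ.image g with hI
  have hcount : k ≤ I.card + C.card := by
    have h1 : (Finset.univ : Finset (Fin k)).card =
        ∑ c ∈ I, (Finset.univ.filter (fun u => g u = c)).card :=
      Finset.card_eq_sum_card_fiberwise
        (fun x _ => Finset.mem_image_of_mem g (Finset.mem_univ x))
    have h2 : ∑ c ∈ I, (Finset.univ.filter (fun u => g u = c)).card ≤
        ∑ c ∈ I, (1 + (if c ∈ C then 1 else 0)) :=
      Finset.sum_le_sum (fun c _ => fib_le c)
    have h3 : ∑ c ∈ I, (1 + (if c ∈ C then (1 : ℕ) else 0)) =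
        I.card + (I.filter (· ∈ C)).card := by
      rw [Finset.sum_add_distrib, Finset.sum_const, smul_eq_mul, mul_one,
        Finset.sum_boole]
      simp
    have h4 : (I.filter (· ∈ C)).card ≤ C.card :=
      Finset.card_le_card (fun c hcm => (Finset.mem_filter.1 hcm).2)
    have h5 : (Finset.univ : Finset (Fin k)).card = k := by
      rw [Finset.card_univ, Fintype.card_fin]
    omega
  -- the closed path-neighborhood of C
  set B : Finset (Fin k) := Finset.univ.filter
    (fun v => ∃ c ∈ C, v.val + 1 = c.val ∨ v = c ∨ c.val + 1 = v.val) with hB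
  have hIB : I ⊆ C ∪ (Finset.univ \ B) := by
    intro v hv
    obtain ⟨u, _, hu⟩ := Finset.mem_image.1 hv
    by_cases hvB : v ∈ B
    · obtain ⟨_, c, hc, hrel⟩ := Finset.mem_filter.1 hvB
      rcases hrel with h | h | h
      · rw [← hu] at h
        exact absurd (Or.inl h) (key c hc u)
      · exact Finset.mem_union_left _ (h ▸ hc)
      · rw [← hu] at h
        exact absurd (Or.inr h) (key c hc u)
    · exact Finset.mem_union_right _ (Finset.mem_sdiff.2 ⟨Finset.mem_univ v, hvB⟩)
  have hIcard : I.card ≤ C.card + (k - B.card) := by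
    calc I.card ≤ (C ∪ (Finset.univ \ B)).card := Finset.card_le_card hIB
      _ ≤ C.card + (Finset.univ \ B).card := Finset.card_union_le _ _
      _ = C.card + (k - B.card) := by
          rw [Finset.card_sdiff_of_subset (Finset.subset_univ _), Finset.card_univ,
            Fintype.card_fin]
  -- C is nonempty
  have hni : ¬ Function.Injective g := fun h => hns (Finite.surjective_of_injective h)
  rw [Function.not_injective_iff] at hni
  obtain ⟨a0, b0, he0, hne0⟩ := hni
  have hCne : C.Nonempty := ⟨g a0, (hCmem _).2 ⟨a0, b0, hne0, he0, rfl⟩⟩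
  -- collision values are pairwise at path-distance at least 2
  have hCdist : ∀ c ∈ C, ∀ d ∈ C, c ≠ d → c.val + 2 ≤ d.val ∨ d.val + 2 ≤ c.val := by
    intro c hc d hd hcd
    by_contra hdist
    obtain ⟨a, a', ha, hga, hga'⟩ := hpair c hc
    obtain ⟨b, b', hb, hgb, hgb'⟩ := hpair d hd
    have step : ∀ x y : Fin k, g x = c → g y = d →
        ¬(x.val + 2 ≤ y.val ∨ y.val + 2 ≤ x.val) := by
      intro x y hx hy hxy
      have := hmap x y hxy
      rw [hx, hy] at this
      omega
    have s1 := step a b hga hgb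
    have s2 := step a b' hga hgb'
    have s3 := step a' b hga' hgb
    have hab : a.val = b.val := by omega
    exact hcd (by rw [← hga, Fin.ext hab, hgb])
  -- pass to natural numbers for the counting of B
  set Cv : Finset ℕ := C.image Fin.val with hCv
  set Bv : Finset ℕ := B.image Fin.val with hBv
  have hCvcard : Cv.card = C.card := Finset.card_image_of_injective _ Fin.val_injective
  have hBvcard : Bv.card = B.card := Finset.card_image_of_injective _ Fin.val_injective
  have hCvne : Cv.Nonempty := hCne.image _
  set c0 : ℕ := Cv.min' hCvne with hc0
  obtain ⟨cm, hcmC, hcm⟩ := Finset.mem_image.1 (Finset.min'_mem Cv hCvne)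
  have hc0int : 1 ≤ c0 ∧ c0 + 2 ≤ k := by
    have := hCint cm hcmC; omega
  have hsub : insert (c0 - 1) (Cv ∪ Cv.image (· + 1)) ⊆ Bv := by
    intro n hn
    rcases Finset.mem_insert.1 hn with h | h
    · subst h
      refine Finset.mem_image.2 ⟨⟨c0 - 1, by omega⟩, ?_, rfl⟩
      refine Finset.mem_filter.2 ⟨Finset.mem_univ _, cm, hcmC, Or.inl ?_⟩
      show c0 - 1 + 1 = cm.val
      omega
    · rcases Finset.mem_union.1 h with h | h
      · obtain ⟨c, hcC, rfl⟩ := Finset.mem_image.1 h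
        exact Finset.mem_image.2 ⟨c,
          Finset.mem_filter.2 ⟨Finset.mem_univ _, c, hcC, Or.inr (Or.inl rfl)⟩, rfl⟩
      · obtain ⟨m, hm, rfl⟩ := Finset.mem_image.1 h
        obtain ⟨c, hcC, rfl⟩ := Finset.mem_image.1 hm
        have hint := hCint c hcC
        exact Finset.mem_image.2 ⟨⟨c.val + 1, by omega⟩,
          Finset.mem_filter.2 ⟨Finset.mem_univ _, c, hcC, Or.inr (Or.inr rfl)⟩, rfl⟩
  have hdistv : ∀ m ∈ Cv, ∀ n ∈ Cv, m ≠ n → m + 2 ≤ n ∨ n + 2 ≤ m := by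
    intro m hm n hn hmn
    obtain ⟨c, hc, rfl⟩ := Finset.mem_image.1 hm
    obtain ⟨d, hd, rfl⟩ := Finset.mem_image.1 hn
    exact hCdist c hc d hd (fun h => hmn (congrArg Fin.val h))
  have hdisj : Disjoint Cv (Cv.image (· + 1)) := by
    rw [Finset.disjoint_left]
    intro n hn hn'
    obtain ⟨m, hm, hmn⟩ := Finset.mem_image.1 hn'
    have hne : m ≠ n := by omega
    have := hdistv m hm n hn hne
    omega
  have hnotmem : c0 - 1 ∉ Cv ∪ Cv.image (· + 1) := by
    intro h
    rcases Finset.mem_union.1 h with h | h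
    · have := Finset.min'_le Cv _ h; omega
    · obtain ⟨m, hm, hmn⟩ := Finset.mem_image.1 h
      have := Finset.min'_le Cv _ hm
      omega
  have hcard : 2 * C.card + 1 ≤ B.card := by
    have h1 : (insert (c0 - 1) (Cv ∪ Cv.image (· + 1))).card = 2 * C.card + 1 := by
      rw [Finset.card_insert_of_notMem hnotmem, Finset.card_union_of_disjoint hdisj,
        Finset.card_image_of_injective _ (add_left_injective 1), hCvcard]
      ring
    rw [← hBvcard, ← h1]
    exact Finset.card_le_card hsub
  have hBk : B.card ≤ k := by
    simpa using Finset.card_le_univ B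
  omega
end

section
/- Let H be the complement of a path P_k or of a cycle C_k on k vertices (with the small exceptions k=4 for both and k=5 for the path). Then the maximum size of a clique minor of H equals ⌊(k + ω(H))/2⌋, where ω(H) is the clique number of H. -/
/-- A graph `H` has a clique minor of size `t` if there are `t` pairwise disjoint
nonempty vertex subsets (branch sets), each inducing a connected subgraph of `H`,
with at least one edge of `H` between every two branch sets. -/
def HasCliqueMinor {V : Type*} (H : SimpleGraph V) (t : ℕ) : Prop :=
  ∃ B : Fin t → Set V,
    (∀ i, (B i).Nonempty) ∧
    (∀ i, (H.induce (B i)).Connected) ∧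
    (Pairwise fun i j => Disjoint (B i) (B j)) ∧
    (∀ i j : Fin t, i ≠ j → ∃ u ∈ B i, ∃ v ∈ B j, H.Adj u v)

open SimpleGraph Finset

/-- Nat-arithmetic characterization of cycle graph adjacency. -/
lemma cycleAdj_iff {k : ℕ} (hk : 2 ≤ k) (u v : Fin k) :
    (SimpleGraph.cycleGraph k).Adj u v ↔
      (u.val + 1 = v.val ∨ v.val + 1 = u.val ∨ (u.val + 1 = k ∧ v.val = 0) ∨
        (v.val + 1 = k ∧ u.val = 0)) := by
  obtain ⟨n, rfl⟩ : ∃ n, k = n + 2 := ⟨k - 2, by omega⟩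
  have key : ∀ a : ℕ, a < n + 2 → (a + 1 < n + 2 ∧ (a + 1) % (n + 2) = a + 1) ∨
      (a + 1 = n + 2 ∧ (a + 1) % (n + 2) = 0) := by
    intro a ha
    rcases eq_or_lt_of_le (Nat.succ_le_of_lt ha) with h | h
    · exact Or.inr ⟨h, by rw [show a + 1 = n + 2 from h, Nat.mod_self]⟩
    · exact Or.inl ⟨h, Nat.mod_eq_of_lt h⟩
  have e1 : u - v = 1 ↔ u.val = (v.val + 1) % (n + 2) := by
    rw [sub_eq_iff_eq_add', Fin.ext_iff, Fin.val_add, Fin.val_one]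
  have e2 : v - u = 1 ↔ v.val = (u.val + 1) % (n + 2) := by
    rw [sub_eq_iff_eq_add', Fin.ext_iff, Fin.val_add, Fin.val_one]
  rw [SimpleGraph.cycleGraph_adj, e1, e2]
  have hu := u.isLt
  have hv := v.isLt
  clear e1 e2
  have h1 := key u.val hu
  have h2 := key v.val hv
  omega

lemma cycle_compl_adj {k : ℕ} (hk : 2 ≤ k) (u v : Fin k) :
    ((SimpleGraph.cycleGraph k)ᶜ).Adj u v ↔
      (u.val ≠ v.val ∧ u.val + 1 ≠ v.val ∧ v.val + 1 ≠ u.val ∧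
        ¬(u.val + 1 = k ∧ v.val = 0) ∧ ¬(v.val + 1 = k ∧ u.val = 0)) := by
  rw [SimpleGraph.compl_adj, cycleAdj_iff hk, ne_eq, Fin.ext_iff]
  tauto

lemma path_compl_adj {k : ℕ} (u v : Fin k) :
    ((SimpleGraph.pathGraph k)ᶜ).Adj u v ↔
      (u.val ≠ v.val ∧ u.val + 1 ≠ v.val ∧ v.val + 1 ≠ u.val) := by
  rw [SimpleGraph.compl_adj, SimpleGraph.pathGraph_adj, ne_eq, Fin.ext_iff]
  tauto

lemma connected_pair {V : Type*} (H : SimpleGraph V) {u v : V}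
    (h : u = v ∨ H.Adj u v) : (H.induce {u, v}).Connected := by
  have hne : Nonempty ↥({u, v} : Set V) := ⟨⟨u, Set.mem_insert _ _⟩⟩
  constructor
  rintro ⟨a, ha⟩ ⟨b, hb⟩
  simp only [Set.mem_insert_iff, Set.mem_singleton_iff] at ha hb
  have reach : ∀ (x y : V) (hx : x ∈ ({u, v} : Set V)) (hy : y ∈ ({u, v} : Set V)),
      x = y → (H.induce {u, v}).Reachable ⟨x, hx⟩ ⟨y, hy⟩ := by
    rintro x y hx hy rfl
    rfl
  have adj : ∀ (x y : V) (hx : x ∈ ({u, v} : Set V)) (hy : y ∈ ({u, v} : Set V)),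
      H.Adj x y → (H.induce {u, v}).Reachable ⟨x, hx⟩ ⟨y, hy⟩ := by
    intro x y hx hy hadj
    exact SimpleGraph.Adj.reachable hadj
  rcases h with rfl | hadj
  · rcases ha with rfl | rfl <;> rcases hb with rfl | rfl <;> exact reach _ _ _ _ rfl
  · rcases ha with rfl | rfl <;> rcases hb with rfl | rfl
    · exact reach _ _ _ _ rfl
    · exact adj _ _ _ _ hadj
    · exact adj _ _ _ _ hadj.symm
    · exact reach _ _ _ _ rfl

lemma hasCliqueMinor_of_pairs {k t : ℕ} {H : SimpleGraph (Fin k)} (P : Fin t → Fin k × Fin k)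
    (h1 : ∀ i, (P i).1 = (P i).2 ∨ H.Adj (P i).1 (P i).2)
    (h2 : ∀ i j : Fin t, i ≠ j → (P i).1 ≠ (P j).1 ∧ (P i).1 ≠ (P j).2 ∧
      (P i).2 ≠ (P j).1 ∧ (P i).2 ≠ (P j).2)
    (h3 : ∀ i j : Fin t, i ≠ j → H.Adj (P i).1 (P j).1 ∨ H.Adj (P i).1 (P j).2 ∨
      H.Adj (P i).2 (P j).1 ∨ H.Adj (P i).2 (P j).2) :
    HasCliqueMinor H t := by
  refine ⟨fun i => {(P i).1, (P i).2}, fun i => ⟨_, Set.mem_insert _ _⟩,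
    fun i => connected_pair H (h1 i), ?_, ?_⟩
  · intro i j hij
    obtain ⟨d1, d2, d3, d4⟩ := h2 i j hij
    rw [Set.disjoint_left]
    intro x hxi hxj
    simp only [Set.mem_insert_iff, Set.mem_singleton_iff] at hxi hxj
    rcases hxi with rfl | rfl <;> rcases hxj with h | h <;> simp_all
  · intro i j hij
    rcases h3 i j hij with h | h | h | h
    · exact ⟨_, Set.mem_insert _ _, _, Set.mem_insert _ _, h⟩
    · exact ⟨_, Set.mem_insert _ _, _, Set.mem_insert_iff.mpr (Or.inr rfl), h⟩
    · exact ⟨_, Set.mem_insert_iff.mpr (Or.inr rfl), _, Set.mem_insert _ _, h⟩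
    · exact ⟨_, Set.mem_insert_iff.mpr (Or.inr rfl), _, Set.mem_insert_iff.mpr (Or.inr rfl), h⟩

lemma upper_bound {k t : ℕ} {H : SimpleGraph (Fin k)}
    (h : HasCliqueMinor H t) : t ≤ (k + H.cliqueNum) / 2 := by
  classical
  obtain ⟨B, hne, _, hdisj, hedge⟩ := h
  -- a chosen element of each branch set
  have hc : ∀ i, ∃ x, x ∈ B i := fun i => hne i
  choose c hc using hc
  -- finset versions of the branch sets
  set F : Fin t → Finset (Fin k) := fun i => (Set.toFinite (B i)).toFinset with hF
  have hmemF : ∀ i x, x ∈ F i ↔ x ∈ B i := by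
    intro i x
    simp only [hF, Set.Finite.mem_toFinset]
  -- singleton indices
  set S : Finset (Fin t) := Finset.univ.filter (fun i => B i ⊆ {c i}) with hS
  -- disjointness of the finsets
  have hdisjF : ∀ i j, i ≠ j → Disjoint (F i) (F j) := by
    intro i j hij
    rw [Finset.disjoint_left]
    intro x hxi hxj
    exact Set.disjoint_left.mp (hdisj hij) ((hmemF i x).mp hxi) ((hmemF j x).mp hxj)
  -- total size at most k
  have hsum : ∑ i, (F i).card ≤ k := by
    rw [← Finset.card_biUnion (fun i _ j _ hij => hdisjF i j hij)]
    calc (Finset.univ.biUnion F).card ≤ (Finset.univ : Finset (Fin k)).card :=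
          Finset.card_le_card (Finset.subset_univ _)
      _ = k := by simp
  -- singletons have ≥ 1, non-singletons ≥ 2
  have hcard1 : ∀ i, 1 ≤ (F i).card := by
    intro i
    rw [Finset.one_le_card]
    exact ⟨c i, (hmemF i _).mpr (hc i)⟩
  have hcard2 : ∀ i, i ∉ S → 2 ≤ (F i).card := by
    intro i hi
    rw [hS, Finset.mem_filter] at hi
    push_neg at hi
    obtain ⟨x, hx, hxne⟩ := Set.not_subset.mp (hi (Finset.mem_univ i))
    refine Finset.one_lt_card.mpr ?_
    exact ⟨c i, (hmemF i _).mpr (hc i), x, (hmemF i _).mpr hx, fun he => hxne (he ▸ rfl)⟩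
  -- sum lower bound
  have hsplit : ∑ i, (F i).card ≥ S.card + 2 * (t - S.card) := by
    rw [← Finset.sum_filter_add_sum_filter_not Finset.univ (fun i => B i ⊆ {c i}), ← hS]
    have b1 : S.card * 1 ≤ ∑ i ∈ S, (F i).card :=
      Finset.card_nsmul_le_sum S _ 1 (fun i _ => hcard1 i)
    have b2 : (Finset.univ.filter (fun i => ¬ B i ⊆ {c i})).card * 2 ≤
        ∑ i ∈ Finset.univ.filter (fun i => ¬ B i ⊆ {c i}), (F i).card :=
      Finset.card_nsmul_le_sum _ _ 2 (fun i hi => hcard2 i (by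
        rw [hS]
        simp only [Finset.mem_filter] at hi ⊢
        tauto))
    have hcc : S.card + (Finset.univ.filter (fun i => ¬ B i ⊆ {c i})).card = t := by
      rw [hS, Finset.card_filter_add_card_filter_not]
      simp
    omega
  -- the singleton representatives form a clique
  have hclique : H.IsClique ↑(S.image c) := by
    intro x hx y hy hxy
    simp only [Finset.coe_image, Set.mem_image, Finset.mem_coe] at hx hy
    obtain ⟨i, hiS, rfl⟩ := hx
    obtain ⟨j, hjS, rfl⟩ := hy
    have hij : i ≠ j := by rintro rfl; exact hxy rfl
    obtain ⟨u, hu, v, hv, hadj⟩ := hedge i j hij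
    rw [hS, Finset.mem_filter] at hiS hjS
    have hu' : u = c i := hiS.2 hu
    have hv' : v = c j := hjS.2 hv
    rwa [hu', hv'] at hadj
  have hScard : (S.image c).card = S.card := by
    apply Finset.card_image_of_injOn
    intro i hi j hj hcij
    by_contra hij
    exact Set.disjoint_left.mp (hdisj hij) (hc i) (hcij ▸ hc j)
  have hSle : S.card ≤ H.cliqueNum := by
    rw [← hScard]
    exact SimpleGraph.IsClique.card_le_cliqueNum (tc := hclique)
  omega

lemma cycle_adj_succ {n : ℕ} (v : Fin (n + 2)) :
    (SimpleGraph.cycleGraph (n + 2)).Adj v (v + 1) := by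
  rw [SimpleGraph.cycleGraph_adj]
  right
  exact add_sub_cancel_left v 1

lemma evens_clique_cycle {k : ℕ} (hk : 5 ≤ k) :
    ((SimpleGraph.cycleGraph k)ᶜ).IsClique
      ↑((Finset.univ : Finset (Fin (k / 2))).image
        (fun a => (⟨2 * a.val, by omega⟩ : Fin k))) := by
  intro x hx y hy hxy
  simp only [Finset.coe_image, Set.mem_image, Finset.coe_univ, Set.mem_univ, true_and] at hx hy
  obtain ⟨a, rfl⟩ := hx
  obtain ⟨b, rfl⟩ := hy
  have hab : 2 * a.val ≠ 2 * b.val := fun he => hxy (by simp [Fin.ext_iff, he])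
  rw [cycle_compl_adj (by omega)]
  have ha := a.isLt
  have hb := b.isLt
  simp only [Fin.val_mk]
  omega

lemma cycle_indep_bound {k : ℕ} (hk : 5 ≤ k) {s : Finset (Fin k)}
    (hs : ((SimpleGraph.cycleGraph k)ᶜ).IsClique ↑s) : s.card ≤ k / 2 := by
  obtain ⟨n, rfl⟩ : ∃ n, k = n + 2 := ⟨k - 2, by omega⟩
  have hdisj : Disjoint s (s.image (· + (1 : Fin (n + 2)))) := by
    rw [Finset.disjoint_right]
    intro x hx hxs
    simp only [Finset.mem_image] at hx
    obtain ⟨v, hv, rfl⟩ := hx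
    have hadj := cycle_adj_succ v
    have hne : v ≠ v + 1 := hadj.ne
    have := hs hv hxs hne
    rw [SimpleGraph.compl_adj] at this
    exact this.2 hadj
  have hinj : (s.image (· + (1 : Fin (n + 2)))).card = s.card :=
    Finset.card_image_of_injective s (add_left_injective 1)
  have hun : (s ∪ s.image (· + (1 : Fin (n + 2)))).card ≤ n + 2 := by
    calc (s ∪ s.image (· + (1 : Fin (n + 2)))).card
        ≤ (Finset.univ : Finset (Fin (n + 2))).card := Finset.card_le_card (Finset.subset_univ _)
      _ = n + 2 := by simp
  rw [Finset.card_union_of_disjoint hdisj, hinj] at hun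
  omega

lemma cycle_cliqueNum {k : ℕ} (hk : 5 ≤ k) :
    ((SimpleGraph.cycleGraph k)ᶜ).cliqueNum = k / 2 := by
  apply le_antisymm
  · obtain ⟨s, hs⟩ := SimpleGraph.exists_isNClique_cliqueNum
      (G := (SimpleGraph.cycleGraph k)ᶜ)
    rw [← hs.card_eq]
    exact cycle_indep_bound hk hs.isClique
  · have hcard : ((Finset.univ : Finset (Fin (k / 2))).image
        (fun a => (⟨2 * a.val, by omega⟩ : Fin k))).card = k / 2 := by
      rw [Finset.card_image_of_injective _ (fun a b hab => by
        simpa [Fin.ext_iff] using hab)]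
      simp
    rw [← hcard]
    exact SimpleGraph.IsClique.card_le_cliqueNum (tc := evens_clique_cycle hk)

lemma evens_clique_path {k : ℕ} (hk : 1 ≤ k) :
    ((SimpleGraph.pathGraph k)ᶜ).IsClique
      ↑((Finset.univ : Finset (Fin ((k + 1) / 2))).image
        (fun a => (⟨2 * a.val, by omega⟩ : Fin k))) := by
  intro x hx y hy hxy
  simp only [Finset.coe_image, Set.mem_image, Finset.coe_univ, Set.mem_univ, true_and] at hx hy
  obtain ⟨a, rfl⟩ := hx
  obtain ⟨b, rfl⟩ := hy
  have hab : 2 * a.val ≠ 2 * b.val := fun he => hxy (by simp [Fin.ext_iff, he])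
  rw [path_compl_adj]
  have ha := a.isLt
  have hb := b.isLt
  simp only [Fin.val_mk]
  omega

lemma path_indep_bound {k : ℕ} {s : Finset (Fin k)}
    (hs : ((SimpleGraph.pathGraph k)ᶜ).IsClique ↑s) : s.card ≤ (k + 1) / 2 := by
  have hinj : Set.InjOn (fun v : Fin k => v.val / 2) ↑s := by
    intro u hu v hv huv
    by_contra hne
    have := hs hu hv hne
    rw [path_compl_adj] at this
    have h2 : u.val / 2 = v.val / 2 := huv
    omega
  calc s.card = (s.image (fun v : Fin k => v.val / 2)).card :=
        (Finset.card_image_of_injOn hinj).symm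
    _ ≤ (Finset.range ((k + 1) / 2)).card := by
        apply Finset.card_le_card
        intro x hx
        simp only [Finset.mem_image] at hx
        obtain ⟨v, hv, rfl⟩ := hx
        have := v.isLt
        simp only [Finset.mem_range]
        omega
    _ = (k + 1) / 2 := Finset.card_range _

lemma path_cliqueNum {k : ℕ} (hk : 1 ≤ k) :
    ((SimpleGraph.pathGraph k)ᶜ).cliqueNum = (k + 1) / 2 := by
  apply le_antisymm
  · obtain ⟨s, hs⟩ := SimpleGraph.exists_isNClique_cliqueNum
      (G := (SimpleGraph.pathGraph k)ᶜ)
    rw [← hs.card_eq]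
    exact path_indep_bound hs.isClique
  · have hcard : ((Finset.univ : Finset (Fin ((k + 1) / 2))).image
        (fun a => (⟨2 * a.val, by omega⟩ : Fin k))).card = (k + 1) / 2 := by
      rw [Finset.card_image_of_injective _ (fun a b hab => by
        simpa [Fin.ext_iff] using hab)]
      simp
    rw [← hcard]
    exact SimpleGraph.IsClique.card_le_cliqueNum (tc := evens_clique_path hk)

lemma cycle_lower_even {m : ℕ} (hm : 4 ≤ m) :
    HasCliqueMinor ((SimpleGraph.cycleGraph (2 * m))ᶜ) (m + m / 2) := by
  apply hasCliqueMinor_of_pairs (P := fun i =>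
    if hi : i.val < m then
      ((⟨2 * i.val, by omega⟩ : Fin (2 * m)), (⟨2 * i.val, by omega⟩ : Fin (2 * m)))
    else
      ((⟨2 * (i.val - m) + 1, by have := i.isLt; omega⟩ : Fin (2 * m)),
       (⟨2 * (i.val - m) + 1 + 2 * (m / 2), by have := i.isLt; omega⟩ : Fin (2 * m))))
  · intro i
    by_cases hi : i.val < m
    · simp only [dif_pos hi]
      exact Or.inl trivial
    · simp only [dif_neg hi]
      right
      rw [cycle_compl_adj (by omega)]
      simp only [Fin.val_mk]
      have := i.isLt
      omega
  · intro i j hij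
    have hij' : i.val ≠ j.val := fun h => hij (Fin.ext h)
    have hi' := i.isLt
    have hj' := j.isLt
    by_cases hi : i.val < m <;> by_cases hj : j.val < m <;>
      simp only [hi, hj, dif_pos, dif_neg, not_false_iff] <;>
      simp only [ne_eq, Fin.mk.injEq] <;> omega
  · intro i j hij
    have hij' : i.val ≠ j.val := fun h => hij (Fin.ext h)
    have hi' := i.isLt
    have hj' := j.isLt
    by_cases hi : i.val < m <;> by_cases hj : j.val < m <;>
      simp only [hi, hj, dif_pos, dif_neg, not_false_iff] <;>
      simp only [cycle_compl_adj (show 2 ≤ 2 * m by omega), Fin.val_mk] <;> omega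

lemma cycle_lower_odd_even {m : ℕ} (hm : 4 ≤ m) (hm2 : m % 2 = 0) :
    HasCliqueMinor ((SimpleGraph.cycleGraph (2 * m + 1))ᶜ) (m + m / 2) := by
  apply hasCliqueMinor_of_pairs (P := fun i =>
    if hi : i.val < m then
      ((⟨2 * i.val, by omega⟩ : Fin (2 * m + 1)), (⟨2 * i.val, by omega⟩ : Fin (2 * m + 1)))
    else
      ((⟨2 * (i.val - m) + 1, by have := i.isLt; omega⟩ : Fin (2 * m + 1)),
       (⟨2 * (i.val - m) + 1 + m, by have := i.isLt; omega⟩ : Fin (2 * m + 1))))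
  · intro i
    by_cases hi : i.val < m
    · simp only [dif_pos hi]
      exact Or.inl trivial
    · simp only [dif_neg hi]
      right
      rw [cycle_compl_adj (by omega)]
      simp only [Fin.val_mk]
      have := i.isLt
      omega
  · intro i j hij
    have hij' : i.val ≠ j.val := fun h => hij (Fin.ext h)
    have hi' := i.isLt
    have hj' := j.isLt
    by_cases hi : i.val < m <;> by_cases hj : j.val < m <;>
      simp only [hi, hj, dif_pos, dif_neg, not_false_iff] <;>
      simp only [ne_eq, Fin.mk.injEq] <;> omega
  · intro i j hij
    have hij' : i.val ≠ j.val := fun h => hij (Fin.ext h)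
    have hi' := i.isLt
    have hj' := j.isLt
    by_cases hi : i.val < m <;> by_cases hj : j.val < m <;>
      simp only [hi, hj, dif_pos, dif_neg, not_false_iff] <;>
      simp only [cycle_compl_adj (show 2 ≤ 2 * m + 1 by omega), Fin.val_mk] <;> omega

lemma cycle_lower_odd_odd {m : ℕ} (hm : 3 ≤ m) (hm2 : m % 2 = 1) :
    HasCliqueMinor ((SimpleGraph.cycleGraph (2 * m + 1))ᶜ) (m + 1 + (m - 1) / 2) := by
  apply hasCliqueMinor_of_pairs (P := fun i =>
    if hi : i.val < m then
      ((⟨2 * i.val, by omega⟩ : Fin (2 * m + 1)), (⟨2 * i.val, by omega⟩ : Fin (2 * m + 1)))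
    else if hi2 : i.val = m then
      ((⟨m, by omega⟩ : Fin (2 * m + 1)), (⟨2 * m, by omega⟩ : Fin (2 * m + 1)))
    else
      ((⟨2 * (i.val - m - 1) + 1, by have := i.isLt; omega⟩ : Fin (2 * m + 1)),
       (⟨m + 2 + 2 * (i.val - m - 1), by have := i.isLt; omega⟩ : Fin (2 * m + 1))))
  · intro i
    have hilt := i.isLt
    split_ifs with hi hi2
    · exact Or.inl rfl
    all_goals
      right
      rw [cycle_compl_adj (by omega)]
      simp only [Fin.val_mk]
      omega
  · intro i j hij
    have hij' : i.val ≠ j.val := fun h => hij (Fin.ext h)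
    have hi' := i.isLt
    have hj' := j.isLt
    split_ifs <;> simp only [ne_eq, Fin.mk.injEq] <;> omega
  · intro i j hij
    have hij' : i.val ≠ j.val := fun h => hij (Fin.ext h)
    have hi' := i.isLt
    have hj' := j.isLt
    split_ifs <;>
      simp only [cycle_compl_adj (show 2 ≤ 2 * m + 1 by omega), Fin.val_mk] <;> omega

lemma path_lower_general {k : ℕ} (hk : 8 ≤ k) :
    HasCliqueMinor ((SimpleGraph.pathGraph k)ᶜ) ((k + 1) / 2 + k / 2 / 2) := by
  apply hasCliqueMinor_of_pairs (P := fun i =>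
    if hi : i.val < (k + 1) / 2 then
      ((⟨2 * i.val, by omega⟩ : Fin k), (⟨2 * i.val, by omega⟩ : Fin k))
    else
      ((⟨2 * (i.val - (k + 1) / 2) + 1, by have := i.isLt; omega⟩ : Fin k),
       (⟨2 * (i.val - (k + 1) / 2) + 1 + 2 * (k / 2 / 2), by have := i.isLt; omega⟩ : Fin k)))
  · intro i
    by_cases hi : i.val < (k + 1) / 2
    · simp only [dif_pos hi]
      exact Or.inl trivial
    · simp only [dif_neg hi]
      right
      rw [path_compl_adj]
      simp only [Fin.val_mk]
      have := i.isLt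
      omega
  · intro i j hij
    have hij' : i.val ≠ j.val := fun h => hij (Fin.ext h)
    have hi' := i.isLt
    have hj' := j.isLt
    by_cases hi : i.val < (k + 1) / 2 <;> by_cases hj : j.val < (k + 1) / 2 <;>
      simp only [hi, hj, dif_pos, dif_neg, not_false_iff] <;>
      simp only [ne_eq, Fin.mk.injEq] <;> omega
  · intro i j hij
    have hij' : i.val ≠ j.val := fun h => hij (Fin.ext h)
    have hi' := i.isLt
    have hj' := j.isLt
    by_cases hi : i.val < (k + 1) / 2 <;> by_cases hj : j.val < (k + 1) / 2 <;>
      simp only [hi, hj, dif_pos, dif_neg, not_false_iff] <;>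
      simp only [path_compl_adj, Fin.val_mk] <;> omega

lemma cycle_lower_five : HasCliqueMinor ((SimpleGraph.cycleGraph 5)ᶜ) 3 := by
  apply hasCliqueMinor_of_pairs
    (P := ![((0 : Fin 5), (0 : Fin 5)), (1, 3), (2, 4)])
  · decide
  · decide
  · decide

lemma cycle_lower_six : HasCliqueMinor ((SimpleGraph.cycleGraph 6)ᶜ) 4 := by
  apply hasCliqueMinor_of_pairs
    (P := ![((0 : Fin 6), (0 : Fin 6)), (3, 3), (1, 4), (2, 5)])
  · decide
  · decide
  · decide

lemma path_lower_six : HasCliqueMinor ((SimpleGraph.pathGraph 6)ᶜ) 4 := by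
  apply hasCliqueMinor_of_pairs
    (P := ![((0 : Fin 6), (0 : Fin 6)), (2, 2), (4, 4), (1, 5)])
  · intro i
    fin_cases i <;> simp [SimpleGraph.compl_adj, SimpleGraph.pathGraph_adj] <;> decide
  · intro i j hij
    fin_cases i <;> fin_cases j <;> simp_all <;> decide
  · intro i j hij
    fin_cases i <;> fin_cases j <;> simp_all [SimpleGraph.compl_adj, SimpleGraph.pathGraph_adj] <;>
      decide

lemma path_lower_seven : HasCliqueMinor ((SimpleGraph.pathGraph 7)ᶜ) 5 := by
  apply hasCliqueMinor_of_pairs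
    (P := ![((0 : Fin 7), (0 : Fin 7)), (2, 2), (4, 4), (6, 6), (1, 5)])
  · intro i
    fin_cases i <;> simp [SimpleGraph.compl_adj, SimpleGraph.pathGraph_adj] <;> decide
  · intro i j hij
    fin_cases i <;> fin_cases j <;> simp_all <;> decide
  · intro i j hij
    fin_cases i <;> fin_cases j <;> simp_all [SimpleGraph.compl_adj, SimpleGraph.pathGraph_adj] <;>
      decide


lemma cycle_lower {k : ℕ} (hk : 5 ≤ k) :
    HasCliqueMinor ((SimpleGraph.cycleGraph k)ᶜ) ((k + k / 2) / 2) := by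
  obtain ⟨m, rfl | rfl⟩ := Nat.even_or_odd' k
  · -- k = 2 * m
    rcases eq_or_ne m 3 with rfl | hm3
    · exact cycle_lower_six
    · have hm : 4 ≤ m := by omega
      have ht : (2 * m + 2 * m / 2) / 2 = m + m / 2 := by omega
      rw [ht]
      exact cycle_lower_even hm
  · -- k = 2 * m + 1
    rcases eq_or_ne m 2 with rfl | hm2
    · exact cycle_lower_five
    · have hm : 3 ≤ m := by omega
      rcases Nat.even_or_odd m with he | ho
      · have he' : m % 2 = 0 := Nat.even_iff.mp he
        have ht : (2 * m + 1 + (2 * m + 1) / 2) / 2 = m + m / 2 := by omega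
        rw [ht]
        exact cycle_lower_odd_even (by omega) he'
      · have ho' : m % 2 = 1 := Nat.odd_iff.mp ho
        have ht : (2 * m + 1 + (2 * m + 1) / 2) / 2 = m + 1 + (m - 1) / 2 := by omega
        rw [ht]
        exact cycle_lower_odd_odd hm ho'

lemma path_lower {k : ℕ} (hk : 6 ≤ k) :
    HasCliqueMinor ((SimpleGraph.pathGraph k)ᶜ) ((k + (k + 1) / 2) / 2) := by
  rcases eq_or_ne k 6 with rfl | h6
  · exact path_lower_six
  rcases eq_or_ne k 7 with rfl | h7
  · exact path_lower_seven
  have hk8 : 8 ≤ k := by omega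
  have ht : (k + (k + 1) / 2) / 2 = (k + 1) / 2 + k / 2 / 2 := by omega
  rw [ht]
  exact path_lower_general hk8

/-- For `H` the complement of the cycle `C_k` (any `k ≥ 5`, excluding the exceptional
case `k = 4`) or the complement of the path `P_k` (any `k ≥ 6`, excluding the
exceptional cases `k = 4, 5`), the maximum size of a clique minor of `H` equals
`⌊(k + ω(H)) / 2⌋`, where `ω(H)` is the clique number of `H`. -/
theorem max_clique_minor_compl_path_and_cycle :
    (∀ k : ℕ, 5 ≤ k →
      IsGreatest {t : ℕ | HasCliqueMinor ((SimpleGraph.cycleGraph k)ᶜ) t}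
        ((k + ((SimpleGraph.cycleGraph k)ᶜ).cliqueNum) / 2)) ∧
    (∀ k : ℕ, 6 ≤ k →
      IsGreatest {t : ℕ | HasCliqueMinor ((SimpleGraph.pathGraph k)ᶜ) t}
        ((k + ((SimpleGraph.pathGraph k)ᶜ).cliqueNum) / 2)) := by
  constructor
  · intro k hk
    constructor
    · show HasCliqueMinor _ _
      rw [cycle_cliqueNum hk]
      exact cycle_lower hk
    · intro t ht
      exact upper_bound ht
  · intro k hk
    constructor
    · show HasCliqueMinor _ _
      rw [path_cliqueNum (by omega)]
      exact path_lower hk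
    · intro t ht
      exact upper_bound ht
end

section
/- Let H_1 and H_2 be graphs with isomorphic cores C, and suppose there is a homomorphism from H_1 to H_2. Then the C-covering number of H_1 is at most the C-covering number of H_2. -/
/-- `φ` is a copy of the pattern `C` inside the graph `F`: an injective map preserving
edges (a subgraph of `F` isomorphic to `C`). -/
def IsCopy {W V : Type*} (C : SimpleGraph W) (F : SimpleGraph V) (φ : W → V) : Prop :=
  Function.Injective φ ∧ ∀ a b : W, C.Adj a b → F.Adj (φ a) (φ b)

/-- A graph `F` is `C`-colorable if there is a coloring of its vertices with
`|V(C)|` colors such that in every copy of `C` in `F`, all vertices receive distinct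
colors. -/
def CColorable {W V : Type*} [Fintype W] (C : SimpleGraph W) (F : SimpleGraph V) : Prop :=
  ∃ f : V → Fin (Fintype.card W), ∀ φ : W → V, IsCopy C F φ → Function.Injective (f ∘ φ)

/-- A `C`-covering of `H` is a collection of vertex subsets such that every copy of `C`
in `H` is contained in some subset, and each subset induces a `C`-colorable subgraph. -/
def IsCCovering {W V : Type*} [Fintype W] (C : SimpleGraph W) (H : SimpleGraph V)
    (𝒞 : Finset (Set V)) : Prop :=
  (∀ φ : W → V, IsCopy C H φ → ∃ s ∈ 𝒞, Set.range φ ⊆ s) ∧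
  (∀ s ∈ 𝒞, CColorable C (H.induce s))

/-- Let `H₁` and `H₂` be graphs whose (isomorphic) core is `C` (`C` is a core, i.e.
every self-homomorphism of `C` is an automorphism, `C` occurs as a subgraph of each
`Hᵢ`, and each `Hᵢ` admits a homomorphism to `C`). If there is a homomorphism from
`H₁` to `H₂`, then the `C`-covering number of `H₁` is at most the `C`-covering number
of `H₂`: every `C`-covering of `H₂` yields a `C`-covering of `H₁` of no larger size. -/
theorem cCoveringNumber_le_of_hom {W V₁ V₂ : Type*} [Fintype W] [Fintype V₁] [Fintype V₂]
    (C : SimpleGraph W) (H₁ : SimpleGraph V₁) (H₂ : SimpleGraph V₂)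
    (hcore : ∀ e : C →g C, Function.Bijective e)
    (φ₁ : W → V₁) (hφ₁ : IsCopy C H₁ φ₁)
    (φ₂ : W → V₂) (hφ₂ : IsCopy C H₂ φ₂)
    (r₁ : H₁ →g C) (r₂ : H₂ →g C)
    (g : H₁ →g H₂)
    (𝒞₂ : Finset (Set V₂)) (h𝒞₂ : IsCCovering C H₂ 𝒞₂) :
    ∃ 𝒞₁ : Finset (Set V₁), IsCCovering C H₁ 𝒞₁ ∧ 𝒞₁.card ≤ 𝒞₂.card := by
  classical
  have key : ∀ p : W → V₂, (∀ a b, C.Adj a b → H₂.Adj (p a) (p b)) → Function.Injective p := by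
    intro p hp
    intro a b hab
    exact (hcore ⟨r₂ ∘ p, fun h => r₂.map_adj (hp _ _ h)⟩).injective
      (show r₂ (p a) = r₂ (p b) from congrArg _ hab)
  obtain ⟨hcov, hcol⟩ := h𝒞₂
  refine ⟨𝒞₂.image (fun s => g ⁻¹' s), ⟨?_, ?_⟩, Finset.card_image_le⟩
  · intro ψ hψ
    have hcopy : IsCopy C H₂ (g ∘ ψ) :=
      ⟨key _ (fun a b h => g.map_adj (hψ.2 a b h)), fun a b h => g.map_adj (hψ.2 a b h)⟩
    obtain ⟨s, hs, hsub⟩ := hcov _ hcopy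
    refine ⟨g ⁻¹' s, Finset.mem_image_of_mem _ hs, ?_⟩
    rintro _ ⟨a, rfl⟩
    exact hsub ⟨a, rfl⟩
  · intro t ht
    obtain ⟨s, hs, rfl⟩ := Finset.mem_image.mp ht
    obtain ⟨f, hf⟩ := hcol s hs
    refine ⟨fun x => f ⟨g x.1, x.2⟩, ?_⟩
    intro ψ hψ
    have hval : Function.Injective (fun w => g ((ψ w) : V₁)) :=
      key _ (fun a b h => g.map_adj (hψ.2 a b h))
    have hcopy' : IsCopy C (H₂.induce s) (fun w => (⟨g (ψ w).1, (ψ w).2⟩ : ↑s)) := by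
      constructor
      · intro a b h
        exact hval (congrArg Subtype.val h)
      · intro a b h
        exact g.map_adj (hψ.2 a b h)
    exact hf _ hcopy'
end

section
/- Let G be a 4-partite 3-uniform hypergraph with parts V_0, V_1, V_2, V_3, and let G' be the undirected graph whose vertices are all pairs (x,y) ∈ V_i × V_{i+1} for i ∈ {0,1,2,3} (indices mod 4), where two vertices (x,y), (x',y') ∈ V_i × V_{i+1} in the same part are adjacent iff y = y', and (x,y) ∈ V_i × V_{i+1} and (x',y') ∈ V_{i+1} × V_{i+2} are adjacent iff y = x' and {x, y, y'} is a hyperedge of G (no other adjacencies). Then G' contains an induced 4-cycle if and only if G contains a 4-hyperclique, i.e., vertices v_i ∈ V_i for i = 0,1,2,3 such that every 3-element subset of {v_0, v_1, v_2, v_3} is a hyperedge. -/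
/-- **Reduction from `4`-hyperclique to induced `C₄`.** Let `G` be a `4`-partite
`3`-uniform hypergraph with pairwise disjoint parts `P 0, P 1, P 2, P 3` (every
hyperedge has three vertices, at most one in each part). Form the undirected graph `G'`
whose vertices are the pairs `(x, y) ∈ P i × P (i+1)` (indices mod `4`), where two
vertices `(x, y)` and `(x', y')` of the same part-pair are adjacent iff `y = y'` (and
they are distinct), and `(x, y) ∈ P i × P (i+1)` and `(x', y') ∈ P (i+1) × P (i+2)`
are adjacent iff `y = x'` and `{x, y, y'}` is a hyperedge (no other adjacencies; these
cases are distinguished automatically since the parts are disjoint). Then `G'`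
contains an induced `4`-cycle iff `G` contains a `4`-hyperclique, i.e. vertices
`v i ∈ P i` such that every `3`-element subset of `{v 0, v 1, v 2, v 3}` is a
hyperedge. -/
theorem induced_C4_iff_four_hyperclique {V : Type*} [DecidableEq V]
    (P : Fin 4 → Set V) (hdisj : Pairwise fun i j => Disjoint (P i) (P j))
    (Hyp : Set (Finset V))
    (huniform : ∀ e ∈ Hyp, e.card = 3)
    (hpartite : ∀ e ∈ Hyp, ∀ i : Fin 4, ∀ a ∈ e, ∀ b ∈ e, a ∈ P i → b ∈ P i → a = b) :
    ∀ (G' : SimpleGraph {p : V × V // ∃ i : Fin 4, p.1 ∈ P i ∧ p.2 ∈ P (i + 1)}),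
      G' = SimpleGraph.fromRel (fun p q =>
        (p.val.2 = q.val.2 ∧ p ≠ q) ∨
        (p.val.2 = q.val.1 ∧ ({p.val.1, p.val.2, q.val.2} : Finset V) ∈ Hyp)) →
      ((∃ a b c d, a ≠ b ∧ a ≠ c ∧ a ≠ d ∧ b ≠ c ∧ b ≠ d ∧ c ≠ d ∧
          G'.Adj a b ∧ G'.Adj b c ∧ G'.Adj c d ∧ G'.Adj d a ∧
          ¬ G'.Adj a c ∧ ¬ G'.Adj b d) ↔
        (∃ v : Fin 4 → V, (∀ i, v i ∈ P i) ∧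
          ∀ i : Fin 4, ({v i, v (i + 1), v (i + 2)} : Finset V) ∈ Hyp)) := by
  intro G' hG'
  subst hG'
  have hu : ∀ (x : V) (i j : Fin 4), x ∈ P i → x ∈ P j → i = j := by
    intro x i j hi hj
    by_contra h
    exact Set.disjoint_left.mp (hdisj h) hi hj
  have hne : ∀ (x y : V) (i j : Fin 4), x ∈ P i → y ∈ P j → i ≠ j → x ≠ y := by
    intro x y i j hx hy hij hxy
    exact hij (hu x i j hx (hxy ▸ hy))
  set rel : {p : V × V // ∃ i : Fin 4, p.1 ∈ P i ∧ p.2 ∈ P (i + 1)} →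
      {p : V × V // ∃ i : Fin 4, p.1 ∈ P i ∧ p.2 ∈ P (i + 1)} → Prop :=
    fun p q =>
      (p.val.2 = q.val.2 ∧ p ≠ q) ∨
      (p.val.2 = q.val.1 ∧ ({p.val.1, p.val.2, q.val.2} : Finset V) ∈ Hyp) with hrel
  have hadj : ∀ p q, (SimpleGraph.fromRel rel).Adj p q ↔ p ≠ q ∧ (rel p q ∨ rel q p) :=
    fun p q => SimpleGraph.fromRel_adj rel p q
  -- classification of edges
  have hclass : ∀ p q (i j : Fin 4), p.val.1 ∈ P i → p.val.2 ∈ P (i+1) →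
      q.val.1 ∈ P j → q.val.2 ∈ P (j+1) → (SimpleGraph.fromRel rel).Adj p q →
      (i = j ∧ p.val.2 = q.val.2) ∨
      (j = i+1 ∧ p.val.2 = q.val.1 ∧ ({p.val.1, p.val.2, q.val.2} : Finset V) ∈ Hyp) ∨
      (i = j+1 ∧ q.val.2 = p.val.1 ∧ ({q.val.1, q.val.2, p.val.2} : Finset V) ∈ Hyp) := by
    intro p q i j hp1 hp2 hq1 hq2 hA
    rw [hadj] at hA
    obtain ⟨hpq, (⟨h2, -⟩ | ⟨h2, hH⟩) | (⟨h2, -⟩ | ⟨h2, hH⟩)⟩ := hA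
    · have := hu _ _ _ hp2 (h2 ▸ hq2)
      exact Or.inl ⟨by omega, h2⟩
    · have := hu _ _ _ hp2 (h2 ▸ hq1)
      exact Or.inr (Or.inl ⟨this.symm, h2, hH⟩)
    · have := hu _ _ _ hq2 (h2 ▸ hp2)
      exact Or.inl ⟨by omega, h2.symm⟩
    · have := hu _ _ _ hq2 (h2 ▸ hp1)
      exact Or.inr (Or.inr ⟨this.symm, h2, hH⟩)
  -- no "same-part" edge in an induced C4
  have hnosame : ∀ a b c d, a ≠ b → a ≠ c → b ≠ d →
      (SimpleGraph.fromRel rel).Adj a b → (SimpleGraph.fromRel rel).Adj b c →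
      (SimpleGraph.fromRel rel).Adj c d → (SimpleGraph.fromRel rel).Adj d a →
      ¬ (SimpleGraph.fromRel rel).Adj a c → ¬ (SimpleGraph.fromRel rel).Adj b d →
      a.val.2 ≠ b.val.2 := by
    intro a b c d hab hac hbd Aab Abc Acd Ada Nac Nbd hsame
    obtain ⟨ia, ha1, ha2⟩ := a.2
    obtain ⟨ib, hb1, hb2⟩ := b.2
    obtain ⟨ic, hc1, hc2⟩ := c.2
    obtain ⟨id, hd1, hd2⟩ := d.2
    have hiba : ib = ia := by have := hu _ _ _ ha2 (hsame ▸ hb2); omega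
    rcases hclass b c ib ic hb1 hb2 hc1 hc2 Abc with
      ⟨hbc, e2⟩ | ⟨hbc, e2, eH⟩ | ⟨hbc, e2, eH⟩
    · -- b.2 = c.2 : then a ~ c
      exact Nac ((hadj a c).mpr ⟨hac, Or.inl (Or.inl ⟨hsame.trans e2, hac⟩)⟩)
    · -- forward b→c : ic = ib + 1
      rcases hclass d a id ia hd1 hd2 ha1 ha2 Ada with
        ⟨hda, f2⟩ | ⟨hda, f2, fH⟩ | ⟨hda, f2, fH⟩
      · -- d.2 = a.2 = b.2 : b ~ d
        exact Nbd ((hadj b d).mpr ⟨hbd, Or.inl (Or.inl ⟨hsame.symm.trans f2.symm, hbd⟩)⟩)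
      · -- r d a : ia = id + 1, so id = ia + 3 while ic = ia + 1 : c-d impossible
        rcases hclass c d ic id hc1 hc2 hd1 hd2 Acd with
          ⟨hcd, -⟩ | ⟨hcd, -⟩ | ⟨hcd, -⟩ <;> omega
      · -- r a d : id = ia + 1, a.2 = d.1, fH : {a.1, a.2, d.2} ∈ Hyp
        rcases hclass c d ic id hc1 hc2 hd1 hd2 Acd with
          ⟨hcd, g2⟩ | ⟨hcd, -⟩ | ⟨hcd, -⟩
        · -- c.2 = d.2 : then a ~ c via hyperedge {a.1, a.2, c.2}
          refine Nac ((hadj a c).mpr ⟨hac, Or.inl (Or.inr ⟨hsame.trans e2, ?_⟩)⟩)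
          rw [g2]; exact fH
        · omega
        · omega
    · -- backward : r c b, ib = ic + 1, e2 : c.2 = b.1
      rcases hclass d a id ia hd1 hd2 ha1 ha2 Ada with
        ⟨hda, f2⟩ | ⟨hda, f2, fH⟩ | ⟨hda, f2, fH⟩
      · exact Nbd ((hadj b d).mpr ⟨hbd, Or.inl (Or.inl ⟨hsame.symm.trans f2.symm, hbd⟩)⟩)
      · -- r d a : ia = id + 1, f2 : d.2 = a.1
        rcases hclass c d ic id hc1 hc2 hd1 hd2 Acd with
          ⟨hcd, g2⟩ | ⟨hcd, -⟩ | ⟨hcd, -⟩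
        · -- c.2 = d.2 : then a = b
          have h1 : a.val.1 = b.val.1 := by rw [← f2, ← g2, e2]
          exact hab (Subtype.ext (Prod.ext_iff.mpr ⟨h1, hsame⟩))
        · omega
        · omega
      · -- r a d : id = ia + 1; ic = ia + 3 : c-d impossible
        rcases hclass c d ic id hc1 hc2 hd1 hd2 Acd with
          ⟨hcd, -⟩ | ⟨hcd, -⟩ | ⟨hcd, -⟩ <;> omega
  -- the chain lemma: if the edge a-b is a forward hyper edge, extract the clique
  have hchain : ∀ a b c d, a ≠ b → a ≠ c → a ≠ d → b ≠ c → b ≠ d → c ≠ d →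
      (SimpleGraph.fromRel rel).Adj a b → (SimpleGraph.fromRel rel).Adj b c →
      (SimpleGraph.fromRel rel).Adj c d → (SimpleGraph.fromRel rel).Adj d a →
      ¬ (SimpleGraph.fromRel rel).Adj a c → ¬ (SimpleGraph.fromRel rel).Adj b d →
      a.val.2 = b.val.1 → ({a.val.1, a.val.2, b.val.2} : Finset V) ∈ Hyp →
      (∃ v : Fin 4 → V, (∀ i, v i ∈ P i) ∧
        ∀ i : Fin 4, ({v i, v (i + 1), v (i + 2)} : Finset V) ∈ Hyp) := by
    intro a b c d hab hac had hbc' hbd hcd' Aab Abc Acd Ada Nac Nbd hfwd habH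
    obtain ⟨ia, ha1, ha2⟩ := a.2
    obtain ⟨ib, hb1, hb2⟩ := b.2
    obtain ⟨ic, hc1, hc2⟩ := c.2
    obtain ⟨id, hd1, hd2⟩ := d.2
    have hib : ib = ia + 1 := by have := hu _ _ _ ha2 (hfwd ▸ hb1); omega
    -- edge b-c must be forward
    obtain ⟨hic, e2, eH⟩ : ic = ib + 1 ∧ b.val.2 = c.val.1 ∧
        ({b.val.1, b.val.2, c.val.2} : Finset V) ∈ Hyp := by
      rcases hclass b c ib ic hb1 hb2 hc1 hc2 Abc with
        ⟨h1, h2⟩ | ⟨h1, h2, h3⟩ | ⟨h1, h2, h3⟩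
      · exact absurd h2 (hnosame b c d a hbc' hbd (fun h => hac h.symm)
          Abc Acd Ada Aab Nbd (fun h => Nac h.symm))
      · exact ⟨h1, h2, h3⟩
      · exact absurd ((hadj a c).mpr ⟨hac, Or.inl (Or.inl ⟨hfwd.trans h2.symm, hac⟩)⟩) Nac
    -- edge c-d must be forward
    obtain ⟨hid, f2, fH⟩ : id = ic + 1 ∧ c.val.2 = d.val.1 ∧
        ({c.val.1, c.val.2, d.val.2} : Finset V) ∈ Hyp := by
      rcases hclass c d ic id hc1 hc2 hd1 hd2 Acd with
        ⟨h1, h2⟩ | ⟨h1, h2, h3⟩ | ⟨h1, h2, h3⟩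
      · exact absurd h2 (hnosame c d a b hcd' (fun h => hac h.symm) (fun h => hbd h.symm)
          Acd Ada Aab Abc (fun h => Nac h.symm) (fun h => Nbd h.symm))
      · exact ⟨h1, h2, h3⟩
      · exact absurd ((hadj b d).mpr ⟨hbd, Or.inl (Or.inl ⟨e2.trans h2.symm, hbd⟩)⟩) Nbd
    -- edge d-a must be forward (types force it)
    obtain ⟨g2, gH⟩ : d.val.2 = a.val.1 ∧ ({d.val.1, d.val.2, a.val.2} : Finset V) ∈ Hyp := by
      rcases hclass d a id ia hd1 hd2 ha1 ha2 Ada with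
        ⟨h1, h2⟩ | ⟨h1, h2, h3⟩ | ⟨h1, h2, h3⟩
      · omega
      · exact ⟨h2, h3⟩
      · omega
    -- rewrite part memberships in terms of ia
    rw [hib] at hb1
    rw [show ic = ia + 2 by omega] at hc1
    rw [show id = ia + 3 by omega] at hd1
    obtain ⟨v, ev0, ev1, ev2, ev3⟩ : ∃ v : Fin 4 → V, v ia = a.val.1 ∧
        v (ia + 1) = b.val.1 ∧ v (ia + 2) = c.val.1 ∧ v (ia + 3) = d.val.1 := by
      refine ⟨fun j => if j = ia then a.val.1 else if j = ia + 1 then b.val.1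
        else if j = ia + 2 then c.val.1 else d.val.1, ?_, ?_, ?_, ?_⟩
      · show (if ia = ia then a.val.1 else _) = a.val.1
        rw [if_pos rfl]
      · show (if ia + 1 = ia then a.val.1 else if ia + 1 = ia + 1 then b.val.1 else _)
          = b.val.1
        rw [if_neg (by omega), if_pos rfl]
      · show (if ia + 2 = ia then a.val.1 else if ia + 2 = ia + 1 then b.val.1
          else if ia + 2 = ia + 2 then c.val.1 else _) = c.val.1
        rw [if_neg (by omega), if_neg (by omega), if_pos rfl]
      · show (if ia + 3 = ia then a.val.1 else if ia + 3 = ia + 1 then b.val.1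
          else if ia + 3 = ia + 2 then c.val.1 else d.val.1) = d.val.1
        rw [if_neg (by omega), if_neg (by omega), if_neg (by omega)]
    refine ⟨v, ?_, ?_⟩
    · intro j
      rcases (show j = ia ∨ j = ia + 1 ∨ j = ia + 2 ∨ j = ia + 3 by omega) with
        h | h | h | h <;> rw [h]
      · rw [ev0]; exact ha1
      · rw [ev1]; exact hb1
      · rw [ev2]; exact hc1
      · rw [ev3]; exact hd1
    · intro j
      rcases (show j = ia ∨ j = ia + 1 ∨ j = ia + 2 ∨ j = ia + 3 by omega) with
        h | h | h | h <;> rw [h]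
      · rw [ev0, ev1, ev2, ← hfwd, ← e2]; exact habH
      · rw [show ia + 1 + 1 = ia + 2 from by omega, show ia + 1 + 2 = ia + 3 from by omega,
          ev1, ev2, ev3, ← e2, ← f2]
        exact eH
      · rw [show ia + 2 + 1 = ia + 3 from by omega, show ia + 2 + 2 = ia from by omega,
          ev2, ev3, ev0, ← f2, ← g2]
        exact fH
      · rw [show ia + 3 + 1 = ia from by omega, show ia + 3 + 2 = ia + 1 from by omega,
          ev3, ev0, ev1, ← g2, ← hfwd]
        exact gH
  constructor
  · rintro ⟨a, b, c, d, hab, hac, had, hbc, hbd, hcd, Aab, Abc, Acd, Ada, Nac, Nbd⟩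
    obtain ⟨ia, ha1, ha2⟩ := a.2
    obtain ⟨ib, hb1, hb2⟩ := b.2
    rcases hclass a b ia ib ha1 ha2 hb1 hb2 Aab with
      ⟨-, h2⟩ | ⟨-, h2, h3⟩ | ⟨-, h2, h3⟩
    · exact absurd h2 (hnosame a b c d hab hac hbd Aab Abc Acd Ada Nac Nbd)
    · exact hchain a b c d hab hac had hbc hbd hcd Aab Abc Acd Ada Nac Nbd h2 h3
    · exact hchain b a d c (Ne.symm hab) hbd hbc had hac (fun h => hcd h.symm)
        Aab.symm Ada.symm Acd.symm Abc.symm Nbd Nac h2 h3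
  · rintro ⟨v, hv, hT⟩
    have hvne : ∀ i j : Fin 4, i ≠ j → v i ≠ v j :=
      fun i j h => hne _ _ i j (hv i) (hv j) h
    refine ⟨⟨(v 0, v 1), 0, hv 0, hv 1⟩, ⟨(v 1, v 2), 1, hv 1, hv 2⟩,
      ⟨(v 2, v 3), 2, hv 2, hv 3⟩, ⟨(v 3, v 0), 3, hv 3, hv 0⟩,
      ?_, ?_, ?_, ?_, ?_, ?_, ?_, ?_, ?_, ?_, ?_, ?_⟩
    · exact fun h => hvne 0 1 (by decide) (congrArg (fun p => p.val.1) h)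
    · exact fun h => hvne 0 2 (by decide) (congrArg (fun p => p.val.1) h)
    · exact fun h => hvne 0 3 (by decide) (congrArg (fun p => p.val.1) h)
    · exact fun h => hvne 1 2 (by decide) (congrArg (fun p => p.val.1) h)
    · exact fun h => hvne 1 3 (by decide) (congrArg (fun p => p.val.1) h)
    · exact fun h => hvne 2 3 (by decide) (congrArg (fun p => p.val.1) h)
    · exact (hadj _ _).mpr ⟨fun h => hvne 0 1 (by decide) (congrArg (fun p => p.val.1) h),
        Or.inl (Or.inr ⟨rfl, hT 0⟩)⟩
    · exact (hadj _ _).mpr ⟨fun h => hvne 1 2 (by decide) (congrArg (fun p => p.val.1) h),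
        Or.inl (Or.inr ⟨rfl, hT 1⟩)⟩
    · exact (hadj _ _).mpr ⟨fun h => hvne 2 3 (by decide) (congrArg (fun p => p.val.1) h),
        Or.inl (Or.inr ⟨rfl, hT 2⟩)⟩
    · exact (hadj _ _).mpr ⟨fun h => hvne 3 0 (by decide) (congrArg (fun p => p.val.1) h),
        Or.inl (Or.inr ⟨rfl, hT 3⟩)⟩
    · intro hAdj
      rw [hadj] at hAdj
      rcases hAdj with ⟨-, (⟨h, -⟩ | ⟨h, -⟩) | (⟨h, -⟩ | ⟨h, -⟩)⟩
      exacts [hvne 1 3 (by decide) h, hvne 1 2 (by decide) h,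
        hvne 3 1 (by decide) h, hvne 3 0 (by decide) h]
    · intro hAdj
      rw [hadj] at hAdj
      rcases hAdj with ⟨-, (⟨h, -⟩ | ⟨h, -⟩) | (⟨h, -⟩ | ⟨h, -⟩)⟩
      exacts [hvne 2 0 (by decide) h, hvne 2 3 (by decide) h,
        hvne 0 2 (by decide) h, hvne 0 1 (by decide) h]
end
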